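/- arXiv:2504.11876 — 3 statements merged into one kernel-verified Lean document; each statement's English description precedes it below -/
import Mathlib

section
/- Let a ≥ 0 and f ∈ H¹ₗₒ꜀(ℝ) with f(x) = 0 for x ≤ a and ∫_a^∞ (f² + f'²) dγ₁ < ∞, where dγ₁ = (4π)^{-1/2} e^{-x²/4} dx is the Gaussian measure. Then there is a constant C > 0 (independent of a and f) such that ∫_a^∞ f² dγ₁ ≤ C ∫_a^∞ f'² dγ₁. -/
open MeasureTheory Real Set

/-- The Gaussian measure on `ℝ` with density `(4π)^(-1/2) e^(-x²/4)`. -/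
noncomputable def gamma1 : Measure ℝ :=
  volume.withDensity fun x => ENNReal.ofReal ((4 * π) ^ (-(1 : ℝ) / 2) * Real.exp (-x ^ 2 / 4))

/-!
Let `ρ` be the density of `γ₁` and `G(x) = γ₁((x, ∞))` its tail, so that `G' = -ρ`. Then
`(f² G)' = 2 f f' G - f² ρ`, and since `f² G` vanishes at `a` and is nonnegative,
`∫ f² ρ ≤ ∫ 2 f f' G` over `(a, ∞)`. For `t ≥ x ≥ 0` we have `t² ≥ x² + (t - x)²`, so `G(x)` is
at most `e^(-x²/4)` times the mass of a Gaussian centred at `x`, i.e. `G(x) ≤ √(4π) ρ(x)`.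
Then `2 √(4π) |f| |f'| ≤ f²/2 + 8π f'²` absorbs half of `∫ f² ρ`, leaving `∫ f² ρ ≤ 16π ∫ f'² ρ`.
-/

open Filter ProbabilityTheory
open scoped NNReal

theorem integral_Ioi_nonneg_of_hasDerivAt {H h : ℝ → ℝ} {a : ℝ}
    (hderiv : ∀ x ∈ Ici a, HasDerivAt H (h x) x) (hint : IntegrableOn h (Ioi a))
    (hH : ∀ x ∈ Ici a, H a ≤ H x) : 0 ≤ ∫ x in Ioi a, h x := by
  refine ge_of_tendsto (intervalIntegral_tendsto_integral_Ioi a hint tendsto_id) ?_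
  filter_upwards [eventually_ge_atTop a] with b hab
  rw [id, intervalIntegral.integral_eq_sub_of_hasDerivAt
    (fun x hx => hderiv x (by rw [uIcc_of_le hab] at hx; exact hx.1))
    ((intervalIntegrable_iff_integrableOn_Ioc_of_le hab).2 (hint.mono_set Ioc_subset_Ioi_self))]
  exact sub_nonneg.2 (hH b hab)

theorem hasDerivAt_integral_Ioi {ρ : ℝ → ℝ} (hi : Integrable ρ) (hc : Continuous ρ) (x : ℝ) :
    HasDerivAt (fun y => ∫ t in Ioi y, ρ t) (-ρ x) x := by
  have htail : (fun y => ∫ t in Ioi y, ρ t) = fun y => (∫ t in Ioi 0, ρ t) - ∫ t in 0..y, ρ t := by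
    funext y
    rw [← intervalIntegral.integral_Ioi_sub_Ioi' hi.integrableOn hi.integrableOn, sub_sub_cancel]
  rw [htail]
  exact ((hc.integral_hasStrictDerivAt 0 x).hasDerivAt).const_sub _

theorem abs_two_mul_mul_mul_le {u v g r K : ℝ} (hg : 0 ≤ g) (hgr : g ≤ K * r) (hr : 0 ≤ r) :
    |2 * u * v * g| ≤ r * u ^ 2 / 2 + 2 * K ^ 2 * (r * v ^ 2) := by
  have hamgm : 2 * K * (|u| * |v|) ≤ u ^ 2 / 2 + 2 * K ^ 2 * v ^ 2 := by
    nlinarith [sq_nonneg (|u| - 2 * K * |v|), sq_abs u, sq_abs v]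
  calc |2 * u * v * g| = 2 * (|u| * |v|) * g := by
        rw [abs_mul, abs_mul, abs_mul, abs_two, abs_of_nonneg hg]; ring
    _ ≤ 2 * (|u| * |v|) * (K * r) := by gcongr
    _ = (2 * K * (|u| * |v|)) * r := by ring
    _ ≤ (u ^ 2 / 2 + 2 * K ^ 2 * v ^ 2) * r := by gcongr
    _ = r * u ^ 2 / 2 + 2 * K ^ 2 * (r * v ^ 2) := by ring

theorem integral_Ioi_mul_sq_le_of_tail_le {ρ G f : ℝ → ℝ} {a K : ℝ}
    (hG : ∀ x ∈ Ici a, HasDerivAt G (-ρ x) x) (hG_nonneg : ∀ x ∈ Ici a, 0 ≤ G x)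
    (hGρ : ∀ x ∈ Ioi a, G x ≤ K * ρ x) (hρ : ∀ x ∈ Ioi a, 0 ≤ ρ x)
    (hf : Differentiable ℝ f) (hfa : f a = 0)
    (hF : IntegrableOn (fun x => ρ x * f x ^ 2) (Ioi a))
    (hE : IntegrableOn (fun x => ρ x * deriv f x ^ 2) (Ioi a)) :
    ∫ x in Ioi a, ρ x * f x ^ 2 ≤ 4 * K ^ 2 * ∫ x in Ioi a, ρ x * deriv f x ^ 2 := by
  have hbound : IntegrableOn (fun x => ρ x * f x ^ 2 / 2 + 2 * K ^ 2 * (ρ x * deriv f x ^ 2))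
      (Ioi a) := (hF.div_const 2).add (hE.const_mul _)
  have hcross : IntegrableOn (fun x => 2 * f x * deriv f x * G x) (Ioi a) := by
    have hGc : ContinuousOn G (Ioi a) := fun x hx =>
      (hG x (mem_Ici_of_Ioi hx)).continuousAt.continuousWithinAt
    refine hbound.mono' ?_ ((ae_restrict_iff' measurableSet_Ioi).2
      (Eventually.of_forall fun x hx => ?_))
    · exact (((continuous_const.mul hf.continuous).aestronglyMeasurable.mul
        (measurable_deriv f).aestronglyMeasurable).mul
        (hGc.aestronglyMeasurable measurableSet_Ioi))
    · exact abs_two_mul_mul_mul_le (hG_nonneg x (mem_Ici_of_Ioi hx)) (hGρ x hx) (hρ x hx)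
  have hIBP : 0 ≤ ∫ x in Ioi a, (2 * f x * deriv f x * G x - ρ x * f x ^ 2) := by
    refine integral_Ioi_nonneg_of_hasDerivAt (H := fun x => f x ^ 2 * G x) (fun x hx => ?_)
      (hcross.sub hF) (fun x hx => ?_)
    · refine (((hf x).hasDerivAt.fun_pow 2).mul (hG x hx)).congr_deriv ?_
      push_cast; ring
    · simp only [hfa]
      simpa using mul_nonneg (sq_nonneg (f x)) (hG_nonneg x hx)
  have hcross_le : ∫ x in Ioi a, 2 * f x * deriv f x * G x ≤
      (∫ x in Ioi a, ρ x * f x ^ 2) / 2 + 2 * K ^ 2 * ∫ x in Ioi a, ρ x * deriv f x ^ 2 := by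
    rw [← integral_div, ← integral_const_mul, ← integral_add (hF.div_const 2) (hE.const_mul _)]
    refine setIntegral_mono_on hcross hbound measurableSet_Ioi fun x hx => ?_
    exact (le_abs_self _).trans
      (abs_two_mul_mul_mul_le (hG_nonneg x (mem_Ici_of_Ioi hx)) (hGρ x hx) (hρ x hx))
  rw [integral_sub hcross hF] at hIBP
  linarith

theorem continuous_gaussianPDFReal (μ : ℝ) (v : ℝ≥0) : Continuous (gaussianPDFReal μ v) := by
  rw [gaussianPDFReal_def]
  fun_prop

theorem gaussianPDFReal_le_exp_mul_gaussianPDFReal (v : ℝ≥0) {x t : ℝ} (hx : 0 ≤ x)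
    (hxt : x ≤ t) :
    gaussianPDFReal 0 v t ≤ exp (-x ^ 2 / (2 * v)) * gaussianPDFReal x v t := by
  rw [gaussianPDFReal, gaussianPDFReal, mul_left_comm, ← exp_add, sub_zero]
  gcongr
  rw [← add_div]
  gcongr
  nlinarith [mul_nonneg hx (sub_nonneg.2 hxt)]

theorem integral_Ioi_gaussianPDFReal_le {v : ℝ≥0} (hv : v ≠ 0) {x : ℝ} (hx : 0 ≤ x) :
    ∫ t in Ioi x, gaussianPDFReal 0 v t ≤ √(2 * π * v) * gaussianPDFReal 0 v x := by
  calc ∫ t in Ioi x, gaussianPDFReal 0 v t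
      ≤ ∫ t in Ioi x, exp (-x ^ 2 / (2 * v)) * gaussianPDFReal x v t :=
        setIntegral_mono_on (integrable_gaussianPDFReal 0 v).integrableOn
          ((integrable_gaussianPDFReal x v).const_mul _).integrableOn measurableSet_Ioi
          fun t ht => gaussianPDFReal_le_exp_mul_gaussianPDFReal v hx (le_of_lt ht)
    _ ≤ ∫ t, exp (-x ^ 2 / (2 * v)) * gaussianPDFReal x v t :=
        setIntegral_le_integral ((integrable_gaussianPDFReal x v).const_mul _)
          (Eventually.of_forall fun t => by positivity [gaussianPDFReal_nonneg x v t])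
    _ = √(2 * π * v) * gaussianPDFReal 0 v x := by
        have : 0 < √(2 * π * v) := by positivity
        rw [integral_const_mul, integral_gaussianPDFReal_eq_one x hv, gaussianPDFReal, sub_zero]
        field_simp

theorem gamma1_eq_gaussianReal : gamma1 = gaussianReal 0 2 := by
  rw [gaussianReal_of_var_ne_zero 0 two_ne_zero, gamma1, gaussianPDF_def]
  congr with x
  rw [gaussianPDFReal, sub_zero, NNReal.coe_ofNat, show 2 * π * 2 = 4 * π by ring,
    show (2 : ℝ) * 2 = 4 by norm_num, neg_div, rpow_neg (by positivity), ← sqrt_eq_rpow]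

theorem setIntegral_gaussianReal {μ : ℝ} {v : ℝ≥0} (hv : v ≠ 0) (g : ℝ → ℝ) {s : Set ℝ}
    (hs : MeasurableSet s) :
    ∫ x in s, g x ∂gaussianReal μ v = ∫ x in s, gaussianPDFReal μ v x * g x := by
  rw [gaussianReal_of_var_ne_zero μ hv, setIntegral_withDensity_eq_setIntegral_toReal_smul
    (measurable_gaussianPDF μ v) (ae_of_all _ fun _ => gaussianPDF_lt_top) g hs]
  simp only [toReal_gaussianPDF, smul_eq_mul]

theorem integrableOn_gaussianReal_iff {μ : ℝ} {v : ℝ≥0} (hv : v ≠ 0) {g : ℝ → ℝ} {s : Set ℝ}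
    (hs : MeasurableSet s) :
    IntegrableOn g s (gaussianReal μ v) ↔
      IntegrableOn (fun x => gaussianPDFReal μ v x * g x) s := by
  rw [IntegrableOn, IntegrableOn, gaussianReal_of_var_ne_zero μ hv, restrict_withDensity hs,
    integrable_withDensity_iff_integrable_smul' (measurable_gaussianPDF μ v)
      (ae_of_all _ fun _ => gaussianPDF_lt_top)]
  simp only [toReal_gaussianPDF, smul_eq_mul]

/-- Gaussian Poincaré inequality on `(a, ∞)` for functions vanishing on `(-∞, a]`. -/
theorem stmt0 :
    ∃ C > 0, ∀ a : ℝ, 0 ≤ a → ∀ f : ℝ → ℝ,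
      Differentiable ℝ f →
      (∀ x ≤ a, f x = 0) →
      IntegrableOn (fun x => (f x) ^ 2 + (deriv f x) ^ 2) (Ioi a) gamma1 →
      ∫ x in Ioi a, (f x) ^ 2 ∂gamma1 ≤ C * ∫ x in Ioi a, (deriv f x) ^ 2 ∂gamma1 := by
  refine ⟨4 * √(2 * π * (2 : ℝ≥0)) ^ 2, by positivity, fun a ha f hf hf0 hInt => ?_⟩
  have hv : (2 : ℝ≥0) ≠ 0 := two_ne_zero
  rw [gamma1_eq_gaussianReal] at hInt ⊢
  have hF : IntegrableOn (fun x => f x ^ 2) (Ioi a) (gaussianReal 0 2) :=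
    hInt.mono' (hf.continuous.pow 2).aestronglyMeasurable (Eventually.of_forall fun x => by
      rw [norm_of_nonneg (sq_nonneg _)]; exact le_add_of_nonneg_right (sq_nonneg _))
  have hE : IntegrableOn (fun x => deriv f x ^ 2) (Ioi a) (gaussianReal 0 2) :=
    hInt.mono' ((measurable_deriv f).pow_const 2).aestronglyMeasurable
      (Eventually.of_forall fun x => by
        rw [norm_of_nonneg (sq_nonneg _)]; exact le_add_of_nonneg_left (sq_nonneg _))
  rw [integrableOn_gaussianReal_iff hv measurableSet_Ioi] at hF hE
  rw [setIntegral_gaussianReal hv _ measurableSet_Ioi,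
    setIntegral_gaussianReal hv _ measurableSet_Ioi]
  exact integral_Ioi_mul_sq_le_of_tail_le (G := fun y => ∫ t in Ioi y, gaussianPDFReal 0 2 t)
    (fun x _ => hasDerivAt_integral_Ioi (integrable_gaussianPDFReal 0 2)
      (continuous_gaussianPDFReal 0 2) x)
    (fun x _ => setIntegral_nonneg measurableSet_Ioi fun t _ => gaussianPDFReal_nonneg 0 2 t)
    (fun x hx => integral_Ioi_gaussianPDFReal_le hv (ha.trans hx.le))
    (fun x _ => gaussianPDFReal_nonneg 0 2 x) hf (hf0 a le_rfl) hF hE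
end

section
/- Let q : ℝⁿ × (−∞, 0) → ℝ and λ ∈ ℝ. Then q is parabolically λ-homogeneous (i.e., q(rx, r²t) = r^λ q(x, t) for all r > 0) and satisfies (Δ − ∂ₜ)q = 0 on an open set U if and only if the function f(x) := q(x, −1) satisfies Δf − (x/2)·∇f + (λ/2) f = 0 on the corresponding slice. -/
open MeasureTheory Real Set
open scoped RealInnerProductSpace

/-- The Laplacian on `ℝⁿ` as the sum of second coordinate derivatives. -/
noncomputable def lap {n : ℕ} (f : EuclideanSpace ℝ (Fin n) → ℝ)
    (x : EuclideanSpace ℝ (Fin n)) : ℝ :=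
  ∑ i : Fin n,
    fderiv ℝ (fun y => fderiv ℝ f y (EuclideanSpace.single i 1)) x (EuclideanSpace.single i 1)

/-!
Euler's identity for the parabolic dilation `(x, t) ↦ (r x, r² t)` gives
`x·∇q − 2 ∂ₜq = λ q` at `t = −1`, so there the heat operator `Δq − ∂ₜq` coincides with the
Ornstein–Uhlenbeck expression `Δf − (x/2)·∇f + (λ/2) f` of the slice `f = q(·, −1)`.
Both `Δ` and `∂ₜ` lower the parabolic degree by two, so the heat operator at `(x, r² t)` is
`r^(λ−2)` times its value at `(x/r, t)`; taking `r = √(−t)` reduces every time to `t = −1`.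
-/

section NormedSpace

variable {E : Type*} [NormedAddCommGroup E] [NormedSpace ℝ E]

theorem fderiv_apply_prod_eq {q : E × ℝ → ℝ} {x : E} {t : ℝ}
    (hq : DifferentiableAt ℝ q (x, t)) (v : E) (s : ℝ) :
    fderiv ℝ q (x, t) (v, s) =
      fderiv ℝ (fun y => q (y, t)) x v + s * deriv (fun τ => q (x, τ)) t := by
  have hx : HasFDerivAt (fun y => q (y, t)) ((fderiv ℝ q (x, t)).comp (.inl ℝ E ℝ)) x :=
    hq.hasFDerivAt.comp x (hasFDerivAt_prodMk_left x t)
  have ht : HasDerivAt (fun τ => q (x, τ)) (fderiv ℝ q (x, t) (0, 1)) t :=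
    hq.hasFDerivAt.comp_hasDerivAt t ((hasDerivAt_const t x).prodMk (hasDerivAt_id t))
  have hvs : ((v, s) : E × ℝ) = (v, 0) + s • ((0 : E), (1 : ℝ)) := by simp
  rw [hx.fderiv, ht.deriv, hvs, map_add, map_smul, smul_eq_mul]
  rfl

def ParabolicallyHomogeneous (lam : ℝ) (q : E × ℝ → ℝ) : Prop :=
  ∀ r : ℝ, 0 < r → ∀ x : E, ∀ t : ℝ, t < 0 → q (r • x, r ^ 2 * t) = r ^ lam * q (x, t)

namespace ParabolicallyHomogeneous

variable {lam : ℝ} {q : E × ℝ → ℝ}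

theorem apply_eq_rpow_mul (hhom : ParabolicallyHomogeneous lam q) {r : ℝ} (hr : 0 < r)
    (x : E) {t : ℝ} (ht : t < 0) : q (x, r ^ 2 * t) = r ^ lam * q (r⁻¹ • x, t) := by
  simpa only [smul_inv_smul₀ hr.ne'] using hhom r hr (r⁻¹ • x) t ht

/-- Euler's identity: the derivative along the generator `(x, 2t)` of the dilations. -/
theorem fderiv_apply_eq (hhom : ParabolicallyHomogeneous lam q) {x : E} {t : ℝ}
    (hq : DifferentiableAt ℝ q (x, t)) (ht : t < 0) :
    fderiv ℝ q (x, t) (x, 2 * t) = lam * q (x, t) := by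
  have hcurve : HasDerivAt (fun r : ℝ => ((r • x, r ^ 2 * t) : E × ℝ)) (x, 2 * t) 1 := by
    refine .prodMk ?_ ?_
    · simpa using (hasDerivAt_id (1 : ℝ)).smul_const x
    · simpa using (hasDerivAt_pow 2 (1 : ℝ)).mul_const t
  have hq' : HasFDerivAt q (fderiv ℝ q (x, t)) ((1 : ℝ) • x, (1 : ℝ) ^ 2 * t) := by
    simpa using hq.hasFDerivAt
  have hlhs := hq'.comp_hasDerivAt 1 hcurve
  have hrhs : HasDerivAt (fun r : ℝ => r ^ lam * q (x, t)) (lam * q (x, t)) 1 := by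
    simpa using (hasDerivAt_rpow_const (p := lam) (Or.inl one_ne_zero)).mul_const (q (x, t))
  have hev : (fun r : ℝ => q (r • x, r ^ 2 * t)) =ᶠ[nhds 1] fun r => r ^ lam * q (x, t) := by
    filter_upwards [Ioi_mem_nhds one_pos] with r hr
    exact hhom r hr x t ht
  exact (hlhs.congr_of_eventuallyEq hev.symm).unique hrhs

theorem deriv_time_mul_eq (hhom : ParabolicallyHomogeneous lam q) {r : ℝ} (hr : 0 < r)
    (x : E) {t : ℝ} (ht : t < 0) :
    deriv (fun s => q (x, s)) (r ^ 2 * t) =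
      r ^ (lam - 2) * deriv (fun s => q (r⁻¹ • x, s)) t := by
  have hev : (fun s => q (x, r ^ 2 * s)) =ᶠ[nhds t] fun s => r ^ lam * q (r⁻¹ • x, s) := by
    filter_upwards [Iio_mem_nhds ht] with s hs
    exact hhom.apply_eq_rpow_mul hr x hs
  have hchain : r ^ 2 * deriv (fun s => q (x, s)) (r ^ 2 * t) =
      r ^ lam * deriv (fun s => q (r⁻¹ • x, s)) t := by
    rw [← smul_eq_mul, ← deriv_comp_mul_left (f := fun s => q (x, s))]
    simp only [hev.deriv_eq, deriv_const_mul_field']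
  rw [rpow_sub hr, rpow_two, div_mul_eq_mul_div, ← hchain, mul_div_cancel_left₀ _ (by positivity)]

end ParabolicallyHomogeneous

end NormedSpace

section Laplacian

variable {n : ℕ}

theorem lap_const_mul (f : EuclideanSpace ℝ (Fin n) → ℝ) (c : ℝ) (x : EuclideanSpace ℝ (Fin n)) :
    lap (fun y => c * f y) x = c * lap f x := by
  have h : ∀ g : EuclideanSpace ℝ (Fin n) → ℝ, fderiv ℝ (fun y => c * g y) = c • fderiv ℝ g :=
    fun g => fderiv_const_smul_field (f := g) c
  simp only [lap, Finset.mul_sum, h, FunLike.coe_smul, Pi.smul_apply, smul_eq_mul]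

theorem lap_comp_smul (f : EuclideanSpace ℝ (Fin n) → ℝ) (a : ℝ) (x : EuclideanSpace ℝ (Fin n)) :
    lap (fun y => f (a • y)) x = a ^ 2 * lap f (a • x) := by
  have h : ∀ g : EuclideanSpace ℝ (Fin n) → ℝ, ∀ y,
      fderiv ℝ (fun z => g (a • z)) y = a • fderiv ℝ g (a • y) :=
    fun g y => fderiv_comp_smul (f := g) a
  simp only [lap, Finset.mul_sum]
  refine Finset.sum_congr rfl fun i _ => ?_
  set e := EuclideanSpace.single i (1 : ℝ)
  have hfirst : (fun y => fderiv ℝ (fun z => f (a • z)) y e) =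
      a • fun y => fderiv ℝ f (a • y) e := by
    ext y
    simp only [h, FunLike.coe_smul, Pi.smul_apply]
  rw [hfirst, fderiv_const_smul_field, Pi.smul_apply, h (fun z => fderiv ℝ f z e)]
  simp only [FunLike.coe_smul, Pi.smul_apply, smul_eq_mul]
  ring

end Laplacian

section HeatOperator

variable {n : ℕ}

noncomputable def heatOperator (q : EuclideanSpace ℝ (Fin n) × ℝ → ℝ)
    (x : EuclideanSpace ℝ (Fin n)) (t : ℝ) : ℝ :=
  lap (fun y => q (y, t)) x - deriv (fun s => q (x, s)) t

namespace ParabolicallyHomogeneous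

variable {lam : ℝ} {q : EuclideanSpace ℝ (Fin n) × ℝ → ℝ}

theorem heatOperator_sq_mul (hhom : ParabolicallyHomogeneous lam q) {r : ℝ} (hr : 0 < r)
    (x : EuclideanSpace ℝ (Fin n)) {t : ℝ} (ht : t < 0) :
    heatOperator q x (r ^ 2 * t) = r ^ (lam - 2) * heatOperator q (r⁻¹ • x) t := by
  have hslice : (fun y => q (y, r ^ 2 * t)) = fun y => r ^ lam * q (r⁻¹ • y, t) :=
    funext fun y => hhom.apply_eq_rpow_mul hr y ht
  have hlap := lap_comp_smul (fun y => q (y, t)) r⁻¹ x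
  rw [heatOperator, heatOperator, hslice, lap_const_mul, hlap, hhom.deriv_time_mul_eq hr x ht,
    rpow_sub hr, rpow_two]
  field_simp

theorem heatOperator_neg_one (hhom : ParabolicallyHomogeneous lam q)
    {x : EuclideanSpace ℝ (Fin n)} (hq : DifferentiableAt ℝ q (x, -1)) :
    heatOperator q x (-1) =
      lap (fun y => q (y, -1)) x - (1 / 2) * ⟪x, gradient (fun y => q (y, -1)) x⟫
        + lam / 2 * q (x, -1) := by
  have heuler := hhom.fderiv_apply_eq hq (by norm_num)
  rw [fderiv_apply_prod_eq hq] at heuler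
  rw [heatOperator, real_inner_comm, gradient, InnerProductSpace.toDual_symm_apply]
  linarith

end ParabolicallyHomogeneous

end HeatOperator

/-- For a parabolically `λ`-homogeneous function `q` on `ℝⁿ × (−∞,0)`, `q` is caloric
(`Δq − ∂ₜq = 0`) if and only if the time `−1` slice `f = q(·,−1)` is an eigenfunction of the
Ornstein–Uhlenbeck operator: `Δf − (x/2)·∇f + (λ/2)f = 0`. -/
theorem stmt7 (n : ℕ) (lam : ℝ) (q : EuclideanSpace ℝ (Fin n) × ℝ → ℝ)
    (hq : ContDiff ℝ 2 q)
    (hhom : ∀ r : ℝ, 0 < r → ∀ x : EuclideanSpace ℝ (Fin n), ∀ t : ℝ, t < 0 →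
      q (r • x, r ^ 2 * t) = r ^ lam * q (x, t)) :
    (∀ x : EuclideanSpace ℝ (Fin n), ∀ t : ℝ, t < 0 →
        lap (fun y => q (y, t)) x - deriv (fun s => q (x, s)) t = 0)
      ↔ (∀ x : EuclideanSpace ℝ (Fin n),
          lap (fun y => q (y, -1)) x
            - (1 / 2) * ⟪x, gradient (fun y => q (y, -1)) x⟫
            + lam / 2 * q (x, -1) = 0) := by
  have hom : ParabolicallyHomogeneous lam q := hhom
  have hslice x := hom.heatOperator_neg_one (hq.differentiable two_ne_zero (x, -1))
  simp only [← hslice]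
  refine ⟨fun h x => h x (-1) (by norm_num), fun h x t ht => ?_⟩
  obtain ⟨r, hr, rfl⟩ : ∃ r > 0, r ^ 2 * -1 = t :=
    ⟨√(-t), sqrt_pos.2 (neg_pos.2 ht), by rw [sq_sqrt (by linarith)]; ring⟩
  change heatOperator q x (r ^ 2 * -1) = 0
  rw [hom.heatOperator_sq_mul hr x (by norm_num), h, mul_zero]
end

section
/- Let E ⊂ ℝⁿ × [−1,1], and let π₁(x,t) = x, π₂(x,t) = t be the coordinate projections. Assume: (i) the Hausdorff dimension of π₁(E) is at most β, for some 0 < β ≤ n; and (ii) for some s > β, for each (x₀,t₀) ∈ E and each ε > 0 there exists ρ > 0 such that no point (x,t) ∈ E with |x − x₀| < ρ satisfies t − t₀ > |x − x₀|^{s−ε}. Then the Hausdorff dimension of π₂(E) is at most β/s. -/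
open MeasureTheory Set Filter

/-- Projection/cleaning lemma: if `E ⊆ ℝⁿ × [−1,1]` has spatial projection of Hausdorff
dimension at most `β`, and points of `E` satisfy the one-sided cleaning condition with
power `s − ε` for every `ε > 0`, then the time projection has Hausdorff dimension
at most `β/s`. -/
theorem stmt12 (n : ℕ) (E : Set (EuclideanSpace ℝ (Fin n) × ℝ)) (β s : ℝ)
    (hE : ∀ z ∈ E, z.2 ∈ Icc (-1 : ℝ) 1)
    (hβ : 0 < β) (hβn : β ≤ n) (hs : β < s)
    (hdim : dimH (Prod.fst '' E) ≤ ENNReal.ofReal β)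
    (hclean : ∀ z ∈ E, ∀ ε : ℝ, 0 < ε → ∃ ρ > 0, ∀ z' ∈ E,
      ‖z'.1 - z.1‖ < ρ → z'.2 - z.2 ≤ ‖z'.1 - z.1‖ ^ (s - ε)) :
    dimH (Prod.snd '' E) ≤ ENNReal.ofReal (β / s) := by
  classical
  have hs0 : (0:ℝ) < s := hβ.trans hs
  -- Key step: for each fixed 0 < ε < s we get the bound β/(s-ε).
  have key : ∀ ε : ℝ, 0 < ε → ε < s →
      dimH (Prod.snd '' E) ≤ ENNReal.ofReal (β / (s - ε)) := by
    intro ε hε hεs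
    have hse : (0:ℝ) < s - ε := by linarith
    obtain ⟨D, hDc, hDd⟩ :=
      TopologicalSpace.exists_countable_dense (EuclideanSpace ℝ (Fin n))
    haveI := hDc.to_subtype
    -- pieces of E
    set P : ℕ → EuclideanSpace ℝ (Fin n) → Set (EuclideanSpace ℝ (Fin n) × ℝ) :=
      fun m d => {z | z ∈ E ∧
        (∀ z' ∈ E, ‖z'.1 - z.1‖ < 1/(m+1) → z'.2 - z.2 ≤ ‖z'.1 - z.1‖ ^ (s-ε)) ∧
        ‖z.1 - d‖ < 1/(2*(m+1))} with hPdef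
    -- two-sided Hölder estimate on each piece
    have graph : ∀ (m : ℕ) (d : EuclideanSpace ℝ (Fin n)), ∀ z ∈ P m d, ∀ z' ∈ P m d,
        |z'.2 - z.2| ≤ ‖z'.1 - z.1‖ ^ (s - ε) := by
      intro m d z hz z' hz'
      obtain ⟨hzE, hzC, hzd⟩ := hz
      obtain ⟨hz'E, hz'C, hz'd⟩ := hz'
      have hm : (0:ℝ) < (m:ℝ) + 1 := by positivity
      have hhalf : (1:ℝ)/(2*((m:ℝ)+1)) = (1/((m:ℝ)+1))/2 := by
        rw [div_div, mul_comm]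
      have htri : ‖z'.1 - z.1‖ ≤ ‖z'.1 - d‖ + ‖z.1 - d‖ := by
        have := norm_sub_le (z'.1 - d) (z.1 - d)
        simpa using this
      have hnear : ‖z'.1 - z.1‖ < 1/((m:ℝ)+1) := by
        rw [hhalf] at hzd hz'd
        linarith
      have h1 := hzC z' hz'E hnear
      have h2 := hz'C z hzE (by rwa [norm_sub_rev])
      rw [norm_sub_rev z.1] at h2
      rw [abs_sub_le_iff]
      exact ⟨h1, h2⟩
    -- the cover
    have hcover : Prod.snd '' E ⊆ ⋃ (p : ℕ × D), Prod.snd '' (P p.1 p.2) := by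
      rintro t ⟨z, hz, rfl⟩
      obtain ⟨ρ, hρ, hρ'⟩ := hclean z hz ε hε
      obtain ⟨m, hm⟩ := exists_nat_one_div_lt hρ
      have hm2 : (0:ℝ) < 1/(2*((m:ℝ)+1)) := by positivity
      obtain ⟨d, hd1, hd2⟩ := (Metric.dense_iff.mp hDd z.1 _ hm2)
      refine mem_iUnion.2 ⟨(m, ⟨d, hd2⟩), ⟨z, ?_, rfl⟩⟩
      refine ⟨hz, fun z' hz' hnear => hρ' z' hz' (hnear.trans hm), ?_⟩
      have : dist d z.1 < 1/(2*((m:ℝ)+1)) := Metric.mem_ball.mp hd1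
      rw [dist_eq_norm, norm_sub_rev] at this
      exact this
    refine le_trans (dimH_mono hcover) ?_
    rw [dimH_iUnion]
    refine iSup_le fun p => ?_
    obtain ⟨m, d⟩ := p
    set r : NNReal := (s - ε).toNNReal with hrdef
    have hr0 : 0 < r := Real.toNNReal_pos.2 hse
    have hrR : ((r : NNReal) : ℝ) = s - ε := Real.coe_toNNReal _ hse.le
    -- the graph function on this piece
    set g : EuclideanSpace ℝ (Fin n) → ℝ := fun x =>
      if h : ∃ t, (x, t) ∈ P m (d:EuclideanSpace ℝ (Fin n)) then h.choose else 0 with hgdef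
    have hg : ∀ z ∈ P m (d:EuclideanSpace ℝ (Fin n)), g z.1 = z.2 := by
      intro z hz
      have h : ∃ t, (z.1, t) ∈ P m (d:EuclideanSpace ℝ (Fin n)) := ⟨z.2, hz⟩
      have hch := h.choose_spec
      have hb := graph m d z hz (z.1, h.choose) hch
      simp only [sub_self, norm_zero] at hb
      rw [Real.zero_rpow hse.ne'] at hb
      have heq : h.choose = z.2 := by
        have h0 : |h.choose - z.2| = 0 := le_antisymm hb (abs_nonneg _)
        have := abs_eq_zero.mp h0
        linarith
      simp [hgdef, h, heq]
    set A := Prod.fst '' (P m (d:EuclideanSpace ℝ (Fin n))) with hAdef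
    have hHolder : HolderOnWith 1 r g A := by
      intro x hx y hy
      obtain ⟨z, hz, rfl⟩ := hx
      obtain ⟨w, hw, rfl⟩ := hy
      rw [hg z hz, hg w hw, ENNReal.coe_one, one_mul]
      have hb := graph m d w hw z hz
      rw [edist_dist, edist_dist, hrR,
        ENNReal.ofReal_rpow_of_nonneg dist_nonneg hse.le]
      refine ENNReal.ofReal_le_ofReal ?_
      rw [Real.dist_eq, dist_eq_norm]
      exact hb
    have himg : Prod.snd '' (P m (d:EuclideanSpace ℝ (Fin n))) ⊆ g '' A := by
      rintro t ⟨z, hz, rfl⟩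
      exact ⟨z.1, ⟨z, hz, rfl⟩, (hg z hz)⟩
    have h1 : dimH (g '' A) ≤ dimH A / (r : ENNReal) := hHolder.dimH_image_le hr0
    have h2 : dimH A ≤ ENNReal.ofReal β := by
      refine le_trans (dimH_mono ?_) hdim
      rintro x ⟨z, hz, rfl⟩
      exact ⟨z, hz.1, rfl⟩
    have h3 : ENNReal.ofReal (s - ε) = (r : ENNReal) := rfl
    calc dimH (Prod.snd '' (P m (d:EuclideanSpace ℝ (Fin n)))) ≤ dimH (g '' A) :=
          dimH_mono himg
      _ ≤ dimH A / (r : ENNReal) := h1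
      _ ≤ ENNReal.ofReal β / (r : ENNReal) := ENNReal.div_le_div_right h2 _
      _ = ENNReal.ofReal (β / (s - ε)) := by
          rw [ENNReal.ofReal_div_of_pos hse, h3]
  -- pass to the limit ε → 0⁺
  have cont : Tendsto (fun ε : ℝ => ENNReal.ofReal (β / (s - ε))) (nhdsWithin 0 (Ioi 0))
      (nhds (ENNReal.ofReal (β / s))) := by
    have c1 : ContinuousAt (fun ε : ℝ => β / (s - ε)) 0 := by
      refine ContinuousAt.div continuousAt_const (continuousAt_const.sub continuousAt_id) ?_
      simpa using hs0.ne'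
    have c2 : ContinuousAt (fun ε : ℝ => ENNReal.ofReal (β / (s - ε))) 0 :=
      ENNReal.continuous_ofReal.continuousAt.comp c1
    have h := c2.tendsto
    simp only [sub_zero] at h
    exact h.mono_left nhdsWithin_le_nhds
  refine ge_of_tendsto cont ?_
  filter_upwards [Ioo_mem_nhdsGT_of_mem (⟨le_rfl, hs0⟩ : (0:ℝ) ∈ Ico 0 s)] with ε hε
  exact key ε hε.1 hε.2
end
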